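/- Let $\alpha\in(0,1)$ and for $\delta>0$ define $\varphi_\delta(t)=\delta^{-1}\mathbf 1_{[0,\delta]}(t)$. Then there exists a constant $C>0$ (depending only on $\alpha$) such that for all $t>0$ and all $s,s'\in[0,t]$ with $s\ne s'$, $\sup_{\delta,\delta'>0}\int_0^t\int_0^t \varphi_\delta(t-s-r)\,\varphi_{\delta'}(t-s'-r')\,|r-r'|^{-\alpha}\,dr\,dr' \le C|s-s'|^{-\alpha}$. -/

import Mathlib

/-!
Write `a = t - s` and `b = t - s'`. The weights `φ_δ(a - r)` and `φ_δ'(b - r')` are the uniform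
probability densities of the windows `[a - δ, a]` and `[b - δ', b]`, so after enlarging the
domain to `ℝ²` it suffices to bound the double average of `|r - r'| ^ (-α)` over these windows.
If `δ, δ' ≤ |a - b| / 4`, the windows are `|a - b| / 2` apart and the average is at most
`2 ^ α |a - b| ^ (-α)`. Otherwise one window has width `d > |a - b| / 4`; since the integral of
`|c - x| ^ (-α)` over any interval of length `d` is at most `2 d ^ (1 - α) / (1 - α)`, averaging
over that window alone gives at most `2 d ^ (-α) / (1 - α) ≤ 2 · 4 ^ α |a - b| ^ (-α) / (1 - α)`.
-/

open MeasureTheory Set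

open scoped ENNReal

lemma Real.div_rpow_neg {x y : ℝ} (hx : 0 ≤ x) (hy : 0 ≤ y) (α : ℝ) :
    (x / y) ^ (-α) = y ^ α * x ^ (-α) := by
  rw [Real.div_rpow hx hy, Real.rpow_neg hy, div_inv_eq_mul, mul_comm]

lemma ofReal_integral_le_lintegral_ofReal {X : Type*} [MeasurableSpace X] {μ : Measure X}
    {f : X → ℝ} (hf : ∀ x, 0 ≤ f x) :
    ENNReal.ofReal (∫ x, f x ∂μ) ≤ ∫⁻ x, ENNReal.ofReal (f x) ∂μ := by
  simpa only [Real.enorm_eq_ofReal (hf _)] using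
    (Real.ofReal_le_enorm _).trans (enorm_integral_le_lintegral_enorm f)

lemma ofReal_integral_integral_le_lintegral_lintegral {X Y : Type*} [MeasurableSpace X]
    [MeasurableSpace Y] {μ : Measure X} {ν : Measure Y} {f : X → Y → ℝ}
    (hf : ∀ x y, 0 ≤ f x y) :
    ENNReal.ofReal (∫ x, ∫ y, f x y ∂ν ∂μ) ≤ ∫⁻ x, ∫⁻ y, ENNReal.ofReal (f x y) ∂ν ∂μ :=
  (ofReal_integral_le_lintegral_ofReal fun x => integral_nonneg (hf x)).trans
    (lintegral_mono fun x => ofReal_integral_le_lintegral_ofReal (hf x))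

lemma ofReal_inv_mul_setLIntegral_Icc_le {g : ℝ → ℝ≥0∞} {M : ℝ≥0∞} (δ a : ℝ)
    (hg : ∀ r ∈ Icc (a - δ) a, g r ≤ M) :
    ENNReal.ofReal δ⁻¹ * ∫⁻ r in Icc (a - δ) a, g r ≤ M := by
  rcases le_or_gt δ 0 with hδ | hδ
  · simp [ENNReal.ofReal_of_nonpos (inv_nonpos.2 hδ)]
  calc ENNReal.ofReal δ⁻¹ * ∫⁻ r in Icc (a - δ) a, g r
      ≤ ENNReal.ofReal δ⁻¹ * ∫⁻ _ in Icc (a - δ) a, M :=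
        mul_le_mul_right (setLIntegral_mono measurable_const hg) _
    _ = M := by
        rw [setLIntegral_const, Real.volume_Icc, sub_sub_cancel, mul_left_comm,
          ← ENNReal.ofReal_mul (inv_nonneg.2 hδ.le), inv_mul_cancel₀ hδ.ne', ENNReal.ofReal_one,
          mul_one]

section RieszKernel

variable {α : ℝ}

lemma lintegral_Ioc_zero_rpow_neg (hα : α < 1) {m : ℝ} (hm : 0 ≤ m) :
    ∫⁻ u in Ioc 0 m, ENNReal.ofReal (u ^ (-α)) = ENNReal.ofReal (m ^ (1 - α) / (1 - α)) := by
  have hα' : -1 < -α := by linarith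
  have hint : IntegrableOn (fun u : ℝ => u ^ (-α)) (Ioc 0 m) :=
    (intervalIntegrable_iff_integrableOn_Ioc_of_le hm).1
      (intervalIntegral.intervalIntegrable_rpow' hα')
  rw [← ofReal_integral_eq_lintegral_ofReal hint
    ((ae_restrict_mem measurableSet_Ioc).mono fun u hu => Real.rpow_nonneg hu.1.le _),
    ← intervalIntegral.integral_of_le hm, integral_rpow (Or.inl hα'),
    Real.zero_rpow (by linarith), neg_add_eq_sub]
  simp

lemma setLIntegral_preimage_abs_sub_rpow_neg_le (hα0 : 0 ≤ α) (hα1 : α < 1) {f : ℝ → ℝ}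
    (hf : MeasurePreserving f) (hfe : MeasurableEmbedding f) {c m : ℝ} (hm : 0 ≤ m)
    (hfc : ∀ x ∈ f ⁻¹' Ioc 0 m, f x ≤ |c - x|) :
    ∫⁻ x in f ⁻¹' Ioc 0 m, ENNReal.ofReal (|c - x| ^ (-α))
      ≤ ENNReal.ofReal (m ^ (1 - α) / (1 - α)) := by
  calc ∫⁻ x in f ⁻¹' Ioc 0 m, ENNReal.ofReal (|c - x| ^ (-α))
      ≤ ∫⁻ x in f ⁻¹' Ioc 0 m, ENNReal.ofReal (f x ^ (-α)) :=
        setLIntegral_mono' (measurableSet_Ioc.preimage hfe.measurable) fun x hx =>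
          ENNReal.ofReal_le_ofReal (Real.rpow_le_rpow_of_nonpos hx.1 (hfc x hx) (by linarith))
    _ = ENNReal.ofReal (m ^ (1 - α) / (1 - α)) := by
        rw [hf.setLIntegral_comp_preimage_emb hfe (fun u => ENNReal.ofReal (u ^ (-α))),
          lintegral_Ioc_zero_rpow_neg hα1 hm]

/-- Off `c`, each half of `(a, b)` lies in a translate or reflection of `(0, b - a]` whose end
nearest `c` is no closer to `c` than `x` is. -/
lemma lintegral_Icc_abs_sub_rpow_neg_le (hα0 : 0 ≤ α) (hα1 : α < 1) (c : ℝ) {a b : ℝ}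
    (hab : a ≤ b) :
    ∫⁻ x in Icc a b, ENNReal.ofReal (|c - x| ^ (-α))
      ≤ ENNReal.ofReal (2 * ((b - a) ^ (1 - α) / (1 - α))) := by
  set L := b - a
  have hL : 0 ≤ L := sub_nonneg.2 hab
  set left := (fun x => min b c - x) ⁻¹' Ioc 0 L
  set right := (fun x => x - max a c) ⁻¹' Ioc 0 L
  have hcover : Ioo a b ⊆ left ∪ right ∪ {c} := by
    intro x ⟨hax, hxb⟩
    rcases lt_trichotomy x c with hxc | rfl | hcx
    · left; left
      simp only [left, mem_preimage, mem_Ioc, sub_pos, lt_min_iff]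
      exact ⟨⟨hxb, hxc⟩, by linarith [min_le_left b c]⟩
    · right; rfl
    · left; right
      simp only [right, mem_preimage, mem_Ioc, sub_pos, max_lt_iff]
      exact ⟨⟨hax, hcx⟩, by linarith [le_max_left a c]⟩
  have hleft : ∫⁻ x in left, ENNReal.ofReal (|c - x| ^ (-α))
      ≤ ENNReal.ofReal (L ^ (1 - α) / (1 - α)) :=
    setLIntegral_preimage_abs_sub_rpow_neg_le hα0 hα1
      (Measure.measurePreserving_sub_left volume _) (MeasurableEquiv.subLeft _).measurableEmbedding
      hL fun x _ =>
        (sub_le_sub_right (min_le_right b c) x).trans (le_abs_self _)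
  have hright : ∫⁻ x in right, ENNReal.ofReal (|c - x| ^ (-α))
      ≤ ENNReal.ofReal (L ^ (1 - α) / (1 - α)) :=
    setLIntegral_preimage_abs_sub_rpow_neg_le hα0 hα1 (measurePreserving_sub_right volume _)
      (measurableEmbedding_subRight _) hL fun x _ =>
        (sub_le_sub_left (le_max_right a c) x).trans (abs_sub_comm c x ▸ le_abs_self _)
  calc ∫⁻ x in Icc a b, ENNReal.ofReal (|c - x| ^ (-α))
      = ∫⁻ x in Ioo a b, ENNReal.ofReal (|c - x| ^ (-α)) := setLIntegral_congr Ioo_ae_eq_Icc.symm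
    _ ≤ ∫⁻ x in left ∪ right ∪ {c}, ENNReal.ofReal (|c - x| ^ (-α)) := lintegral_mono_set hcover
    _ ≤ (∫⁻ x in left, ENNReal.ofReal (|c - x| ^ (-α)))
          + ∫⁻ x in right, ENNReal.ofReal (|c - x| ^ (-α)) := by
        refine (lintegral_union_le _ _ _).trans ?_
        rw [lintegral_singleton, Real.volume_singleton, mul_zero, add_zero]
        exact lintegral_union_le _ _ _
    _ ≤ ENNReal.ofReal (L ^ (1 - α) / (1 - α)) + ENNReal.ofReal (L ^ (1 - α) / (1 - α)) :=
        add_le_add hleft hright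
    _ = ENNReal.ofReal (2 * (L ^ (1 - α) / (1 - α))) := by
        rw [← ENNReal.ofReal_add (by positivity) (by positivity), two_mul]

lemma ofReal_inv_mul_setLIntegral_Icc_abs_sub_rpow_neg_le (hα0 : 0 ≤ α) (hα1 : α < 1) {δ : ℝ}
    (hδ : 0 < δ) (a c : ℝ) :
    ENNReal.ofReal δ⁻¹ * ∫⁻ x in Icc (a - δ) a, ENNReal.ofReal (|c - x| ^ (-α))
      ≤ ENNReal.ofReal (2 * δ ^ (-α) / (1 - α)) := by
  calc ENNReal.ofReal δ⁻¹ * ∫⁻ x in Icc (a - δ) a, ENNReal.ofReal (|c - x| ^ (-α))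
      ≤ ENNReal.ofReal δ⁻¹ * ENNReal.ofReal (2 * (δ ^ (1 - α) / (1 - α))) := by
        gcongr
        simpa using lintegral_Icc_abs_sub_rpow_neg_le hα0 hα1 c (sub_le_self a hδ.le)
    _ = ENNReal.ofReal (2 * δ ^ (-α) / (1 - α)) := by
        rw [← ENNReal.ofReal_mul (inv_nonneg.2 hδ.le), sub_eq_add_neg,
          Real.rpow_add hδ, Real.rpow_one]
        congr 1
        field_simp

end RieszKernel

noncomputable def diracApprox (δ x : ℝ) : ℝ :=
  (Icc 0 δ).indicator (fun _ => δ⁻¹) x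

lemma diracApprox_nonneg (δ x : ℝ) : 0 ≤ diracApprox δ x :=
  indicator_nonneg (fun _ hx => inv_nonneg.2 (hx.1.trans hx.2)) x

@[fun_prop]
lemma measurable_diracApprox (δ : ℝ) : Measurable (diracApprox δ) :=
  measurable_const.indicator measurableSet_Icc

lemma lintegral_ofReal_diracApprox_sub_mul (δ a : ℝ) (g : ℝ → ℝ≥0∞) :
    ∫⁻ r, ENNReal.ofReal (diracApprox δ (a - r)) * g r
      = ENNReal.ofReal δ⁻¹ * ∫⁻ r in Icc (a - δ) a, g r := by
  have hind : ∀ r, ENNReal.ofReal (diracApprox δ (a - r)) * g r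
      = (Icc (a - δ) a).indicator (fun r => ENNReal.ofReal δ⁻¹ * g r) r := by
    intro r
    have hmem : a - r ∈ Icc 0 δ ↔ r ∈ Icc (a - δ) a := by
      simp only [mem_Icc]; constructor <;> intro h <;> constructor <;> linarith [h.1, h.2]
    by_cases hr : r ∈ Icc (a - δ) a
    · simp [diracApprox, hr, hmem.2 hr]
    · simp [diracApprox, hr, mt hmem.1 hr]
  simp_rw [hind]
  rw [lintegral_indicator measurableSet_Icc, lintegral_const_mul' _ _ ENNReal.ofReal_ne_top]

section MollifiedKernel

variable {α : ℝ}

noncomputable def mollifiedKernel (α δ δ' a b : ℝ) : ℝ≥0∞ :=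
  ∫⁻ r, ∫⁻ r', ENNReal.ofReal (diracApprox δ (a - r) * diracApprox δ' (b - r') * |r - r'| ^ (-α))

lemma mollifiedKernel_eq (δ δ' a b : ℝ) :
    mollifiedKernel α δ δ' a b = ENNReal.ofReal δ⁻¹ * ∫⁻ r in Icc (a - δ) a,
      ENNReal.ofReal δ'⁻¹ * ∫⁻ r' in Icc (b - δ') b, ENNReal.ofReal (|r - r'| ^ (-α)) := by
  simp_rw [← lintegral_ofReal_diracApprox_sub_mul,
    ← lintegral_const_mul' _ _ ENNReal.ofReal_ne_top]
  refine lintegral_congr fun r => lintegral_congr fun r' => ?_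
  rw [ENNReal.ofReal_mul (mul_nonneg (diracApprox_nonneg _ _) (diracApprox_nonneg _ _)),
    ENNReal.ofReal_mul (diracApprox_nonneg _ _), mul_assoc]

lemma mollifiedKernel_comm (δ δ' a b : ℝ) :
    mollifiedKernel α δ δ' a b = mollifiedKernel α δ' δ b a := by
  rw [mollifiedKernel, lintegral_lintegral_swap (by unfold Function.uncurry; fun_prop)]
  simp_rw [abs_sub_comm, mul_comm (diracApprox δ _)]
  rfl

lemma mollifiedKernel_le_of_separated (hα : 0 ≤ α) {δ δ' a b ρ : ℝ} (hρ : 0 < ρ)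
    (hsep : ∀ r ∈ Icc (a - δ) a, ∀ r' ∈ Icc (b - δ') b, ρ ≤ |r - r'|) :
    mollifiedKernel α δ δ' a b ≤ ENNReal.ofReal (ρ ^ (-α)) := by
  rw [mollifiedKernel_eq]
  refine ofReal_inv_mul_setLIntegral_Icc_le δ a fun r hr => ?_
  refine ofReal_inv_mul_setLIntegral_Icc_le δ' b fun r' hr' => ?_
  exact ENNReal.ofReal_le_ofReal (Real.rpow_le_rpow_of_nonpos hρ (hsep r hr r' hr') (by linarith))

lemma mollifiedKernel_le_of_width (hα0 : 0 ≤ α) (hα1 : α < 1) {δ' : ℝ} (hδ' : 0 < δ')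
    (δ a b : ℝ) :
    mollifiedKernel α δ δ' a b ≤ ENNReal.ofReal (2 * δ' ^ (-α) / (1 - α)) := by
  rw [mollifiedKernel_eq]
  exact ofReal_inv_mul_setLIntegral_Icc_le δ a fun r _ =>
    ofReal_inv_mul_setLIntegral_Icc_abs_sub_rpow_neg_le hα0 hα1 hδ' b r

lemma mollifiedKernel_le (hα0 : 0 ≤ α) (hα1 : α < 1) {δ δ' a b : ℝ} (hδ : 0 < δ)
    (hδ' : 0 < δ') (hab : a ≠ b) :
    mollifiedKernel α δ δ' a b ≤ ENNReal.ofReal (2 * 4 ^ α / (1 - α) * |a - b| ^ (-α)) := by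
  have hh : 0 < |a - b| := abs_pos.2 (sub_ne_zero.2 hab)
  have h1α : 0 < 1 - α := sub_pos.2 hα1
  have hwidth_bound : ∀ d, |a - b| / 4 < d →
      2 * d ^ (-α) / (1 - α) ≤ 2 * 4 ^ α / (1 - α) * |a - b| ^ (-α) := fun d hd => by
    calc 2 * d ^ (-α) / (1 - α) ≤ 2 * (|a - b| / 4) ^ (-α) / (1 - α) := by
          gcongr 2 * ?_ / _
          exact Real.rpow_le_rpow_of_nonpos (div_pos hh four_pos) hd.le (neg_nonpos.2 hα0)
      _ = 2 * 4 ^ α / (1 - α) * |a - b| ^ (-α) := by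
          rw [Real.div_rpow_neg hh.le (by norm_num)]; ring
  rcases le_or_gt (max δ δ') (|a - b| / 4) with hnarrow | hwide_window
  · have hsep : ∀ r ∈ Icc (a - δ) a, ∀ r' ∈ Icc (b - δ') b, |a - b| / 2 ≤ |r - r'| := by
      intro r hr r' hr'
      have har : |a - r| ≤ δ := abs_le.2 ⟨by linarith [hr.2], by linarith [hr.1]⟩
      have hrb : |r' - b| ≤ δ' := abs_le.2 ⟨by linarith [hr'.1], by linarith [hr'.2]⟩
      linarith [abs_sub_le a r b, abs_sub_le r r' b, le_max_left δ δ', le_max_right δ δ']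
    refine (mollifiedKernel_le_of_separated hα0 (by positivity) hsep).trans
      (ENNReal.ofReal_le_ofReal ?_)
    have h24 : (2:ℝ) ^ α ≤ 2 * 4 ^ α / (1 - α) := by
      rw [le_div_iff₀ h1α]
      nlinarith [Real.rpow_le_rpow (by norm_num) (by norm_num : (2:ℝ) ≤ 4) hα0,
        Real.rpow_nonneg (by norm_num : (0:ℝ) ≤ 2) α]
    rw [Real.div_rpow_neg hh.le (by norm_num)]
    gcongr
  · rcases lt_max_iff.1 hwide_window with hδ_wide | hδ'_wide
    · rw [mollifiedKernel_comm]
      exact (mollifiedKernel_le_of_width hα0 hα1 hδ _ _ _).trans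
        (ENNReal.ofReal_le_ofReal (hwidth_bound δ hδ_wide))
    · exact (mollifiedKernel_le_of_width hα0 hα1 hδ' _ _ _).trans
        (ENNReal.ofReal_le_ofReal (hwidth_bound δ' hδ'_wide))

end MollifiedKernel

theorem stmt0 (α : ℝ) (hα : α ∈ Set.Ioo (0:ℝ) 1) :
    ∃ C > (0:ℝ), ∀ t > (0:ℝ), ∀ s ∈ Set.Icc (0:ℝ) t, ∀ s' ∈ Set.Icc (0:ℝ) t, s ≠ s' →
      ∀ δ > (0:ℝ), ∀ δ' > (0:ℝ),
      (∫ r in Set.Ioc (0:ℝ) t, ∫ r' in Set.Ioc (0:ℝ) t,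
          (Set.indicator (Set.Icc (0:ℝ) δ) (fun _ => δ⁻¹) (t - s - r)) *
          (Set.indicator (Set.Icc (0:ℝ) δ') (fun _ => δ'⁻¹) (t - s' - r')) *
          |r - r'| ^ (-α))
        ≤ C * |s - s'| ^ (-α) := by
  obtain ⟨hα0, hα1⟩ := hα
  have hC : 0 < 2 * 4 ^ α / (1 - α) := by have := sub_pos.2 hα1; positivity
  refine ⟨_, hC, fun t _ s _ s' _ hss' δ hδ δ' hδ' => ?_⟩
  have hts : t - s ≠ t - s' := fun h => hss' (by linarith)
  rw [← ENNReal.ofReal_le_ofReal_iff (mul_nonneg hC.le (Real.rpow_nonneg (abs_nonneg _) _))]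
  calc _ ≤ ∫⁻ r in Ioc 0 t, ∫⁻ r' in Ioc 0 t, ENNReal.ofReal
          (diracApprox δ (t - s - r) * diracApprox δ' (t - s' - r') * |r - r'| ^ (-α)) :=
        ofReal_integral_integral_le_lintegral_lintegral fun r r' =>
          mul_nonneg (mul_nonneg (diracApprox_nonneg _ _) (diracApprox_nonneg _ _))
            (Real.rpow_nonneg (abs_nonneg _) _)
    _ ≤ mollifiedKernel α δ δ' (t - s) (t - s') :=
        (lintegral_mono fun r => setLIntegral_le_lintegral _ _).trans
          (setLIntegral_le_lintegral _ _)
    _ ≤ _ := by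
        simpa [abs_sub_comm] using mollifiedKernel_le hα0.le hα1 hδ hδ' hts
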